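/- Let n ≥ 2 and m ≥ 2 and let μ_{n,m} be the two-stage sampling law associated with ν. Then the distributional variance estimator is unbiased: ∫ V̂ar_k^{(n,m)}(X) dμ_{n,m}(X) = Var_k(ν) = ∫ ⟨P|k|P⟩ dν(P) − ⟨join(ν)|k|join(ν)⟩. -/

import Mathlib

/-!
Two observations `X i j`, `X s t` at different positions are jointly distributed as
`∫ P ⊗ P dν(P)` when they come from the same group (`i = s`), and as `join ν ⊗ join ν`
when they come from different groups. Hence `k (X i j) (X i t)` has mean `∫ ⟨P|k|P⟩ dν`
and `k (X i j) (X s t)` has mean `⟨join ν|k|join ν⟩`; the estimator averages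
`n m (m - 1)` terms of the first kind and `n (n - 1) m²` of the second.
-/

open MeasureTheory ProbabilityTheory

noncomputable section

/-- The σ-algebra on the space of probability measures induced from the σ-algebra on
`Measure Y` generated by the evaluation maps. -/
instance {Y : Type*} [MeasurableSpace Y] : MeasurableSpace (ProbabilityMeasure Y) :=
  MeasurableSpace.comap (fun P => (P : Measure Y)) inferInstance

/-- The kernel bilinear form `⟨P|k|Q⟩ = ∫∫ k(x,y) dP(x) dQ(y)`. -/
def kerInner {Y : Type*} [MeasurableSpace Y] (k : Y → Y → ℝ) (P Q : Measure Y) : ℝ :=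
  ∫ x, ∫ y, k x y ∂Q ∂P

/-- `join(ν)`: the probability measure `A ↦ ∫ P(A) dν(P)`. -/
def pmJoin {Y : Type*} [MeasurableSpace Y] (ν : Measure (ProbabilityMeasure Y)) : Measure Y :=
  ν.bind (fun P => (P : Measure Y))

/-- The two-stage sampling law `μ_{n,m}` on `Fin n → Fin m → Y`: sample
`P₁, …, Pₙ` i.i.d. from `ν`, then conditionally on `Pᵢ` sample `X_{i1}, …, X_{im}`
i.i.d. from `Pᵢ`, independently across `i`. -/
def twoStage {Y : Type*} [MeasurableSpace Y] (ν : Measure (ProbabilityMeasure Y))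
    (n m : ℕ) : Measure (Fin n → Fin m → Y) :=
  (Measure.pi fun _ : Fin n => ν).bind
    (fun Ps => Measure.pi fun i : Fin n => Measure.pi fun _ : Fin m => (Ps i : Measure Y))

/-- The distributional variance estimator
`V̂ar_k^{(n,m)}(X) = (1/(n m (m−1))) Σᵢ Σ_{j≠t} k(X_{ij}, X_{it})
  − (1/(n (n−1) m²)) Σ_{i≠s} Σ_{j,t} k(X_{ij}, X_{st})`. -/
def varEst {Y : Type*} (k : Y → Y → ℝ) (n m : ℕ) (X : Fin n → Fin m → Y) : ℝ :=
  (1 / ((n : ℝ) * (m : ℝ) * ((m : ℝ) - 1))) *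
      ∑ i, ∑ j, ∑ t ∈ Finset.univ.erase j, k (X i j) (X i t)
  - (1 / ((n : ℝ) * ((n : ℝ) - 1) * (m : ℝ) ^ 2)) *
      ∑ i, ∑ s ∈ Finset.univ.erase i, ∑ j, ∑ t, k (X i j) (X s t)

lemma Measurable.measure_pi {α ι : Type*} [MeasurableSpace α] [Fintype ι] {X : ι → Type*}
    [∀ i, MeasurableSpace (X i)] {μ : α → (i : ι) → Measure (X i)}
    [∀ a i, IsProbabilityMeasure (μ a i)] (hμ : ∀ i, Measurable fun a ↦ μ a i) :
    Measurable fun a ↦ Measure.pi (μ a) := by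
  refine .measure_of_isPiSystem_of_isProbabilityMeasure generateFrom_pi.symm isPiSystem_pi ?_
  rintro _ ⟨A, hA, rfl⟩
  simp_rw [Measure.pi_pi]
  exact Finset.measurable_prod _ fun i _ ↦
    (Measure.measurable_coe (hA i (Set.mem_univ i))).comp (hμ i)

namespace MeasureTheory.Measure

lemma pi_map_pair {ι : Type*} [Fintype ι] {X : ι → Type*} [∀ i, MeasurableSpace (X i)]
    (μ : (i : ι) → Measure (X i)) [∀ i, IsProbabilityMeasure (μ i)] {i j : ι}
    (hij : i ≠ j) :
    (Measure.pi μ).map (fun x ↦ (x i, x j)) = (μ i).prod (μ j) := by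
  have hindep : iIndepFun (fun i (x : (i : ι) → X i) ↦ x i) (Measure.pi μ) :=
    iIndepFun_pi (X := fun _ ↦ id) fun _ ↦ aemeasurable_id
  rw [(hindep.indepFun hij).map_prod_eq_prod_map_map (measurable_pi_apply i).aemeasurable
      (measurable_pi_apply j).aemeasurable,
    (measurePreserving_eval μ i).map_eq, (measurePreserving_eval μ j).map_eq]

variable {α β γ δ : Type*} [MeasurableSpace α] [MeasurableSpace β] [MeasurableSpace γ]
  [MeasurableSpace δ]

lemma prod_comp_comp {μ : Measure α} {ν : Measure γ} [SFinite μ] [SFinite ν]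
    {κ : Kernel α β} {η : Kernel γ δ} [IsSFiniteKernel κ] [IsSFiniteKernel η] :
    (κ ∘ₘ μ).prod (η ∘ₘ ν) = (κ ∥ₖ η) ∘ₘ (μ.prod ν) := by
  rw [prod_comp_left, prod_comp_right, comp_assoc, Kernel.parallelComp_comp_parallelComp,
    Kernel.id_comp, Kernel.comp_id]

lemma comap_comp_eq_comp_map {μ : Measure α} {κ : Kernel β γ} {f : α → β}
    (hf : Measurable f) :
    κ.comap f hf ∘ₘ μ = κ ∘ₘ μ.map f := by
  rw [← Kernel.comp_deterministic_eq_comap, ← comp_assoc, deterministic_comp_eq_map]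

lemma integral_comp {E : Type*} [NormedAddCommGroup E] [NormedSpace ℝ E]
    {μ : Measure α} {κ : Kernel α β} {f : β → E} (hf : Integrable f (κ ∘ₘ μ)) :
    ∫ b, f b ∂(κ ∘ₘ μ) = ∫ a, ∫ b, f b ∂κ a ∂μ := by
  rw [comp_eq_comp_const_apply] at hf ⊢
  simpa using Kernel.integral_comp hf

end MeasureTheory.Measure

lemma integral_finsetSum_eq_card_mul {α ι : Type*} [MeasurableSpace α] {μ : Measure α}
    {s : Finset ι} {f : ι → α → ℝ} {c : ℝ} (hf : ∀ i ∈ s, Integrable (f i) μ)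
    (h : ∀ i ∈ s, ∫ a, f i a ∂μ = c) :
    ∫ a, ∑ i ∈ s, f i a ∂μ = s.card * c := by
  rw [integral_finsetSum s hf, Finset.sum_congr rfl h, Finset.sum_const, nsmul_eq_mul]

section TwoStage

variable {Y : Type*} [MeasurableSpace Y]

lemma measurable_probabilityMeasure_toMeasure :
    Measurable ((↑) : ProbabilityMeasure Y → Measure Y) :=
  measurable_iff_comap_le.mpr le_rfl

variable (Y) in
def pmKernel : Kernel (ProbabilityMeasure Y) Y :=
  ⟨(↑), measurable_probabilityMeasure_toMeasure⟩

instance : IsMarkovKernel (pmKernel Y) := ⟨fun P ↦ P.2⟩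

variable (Y) in
def twoStageKernel (n m : ℕ) :
    Kernel (Fin n → ProbabilityMeasure Y) (Fin n → Fin m → Y) :=
  ⟨fun Ps ↦ Measure.pi fun i ↦ Measure.pi fun _ : Fin m ↦ (Ps i : Measure Y),
    .measure_pi fun i ↦ .measure_pi fun _ ↦
      measurable_probabilityMeasure_toMeasure.comp (measurable_pi_apply i)⟩

instance (n m : ℕ) : IsMarkovKernel (twoStageKernel Y n m) :=
  ⟨fun _ ↦ by change IsProbabilityMeasure (Measure.pi _); infer_instance⟩

lemma pmJoin_eq_comp (ν : Measure (ProbabilityMeasure Y)) : pmJoin ν = pmKernel Y ∘ₘ ν := rfl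

lemma twoStage_eq_comp (ν : Measure (ProbabilityMeasure Y)) (n m : ℕ) :
    twoStage ν n m = twoStageKernel Y n m ∘ₘ Measure.pi fun _ ↦ ν := rfl

instance (ν : Measure (ProbabilityMeasure Y)) [IsProbabilityMeasure ν] :
    IsProbabilityMeasure (pmJoin ν) := by
  rw [pmJoin_eq_comp]; infer_instance

instance (ν : Measure (ProbabilityMeasure Y)) [IsProbabilityMeasure ν] (n m : ℕ) :
    IsProbabilityMeasure (twoStage ν n m) := by
  rw [twoStage_eq_comp]; infer_instance

lemma twoStageKernel_map_pair {n m : ℕ} (Ps : Fin n → ProbabilityMeasure Y) {i s : Fin n}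
    {j t : Fin m} (h : (i, j) ≠ (s, t)) :
    (twoStageKernel Y n m Ps).map (fun X ↦ (X i j, X s t))
      = (Ps i : Measure Y).prod (Ps s) := by
  change (Measure.pi _).map _ = _
  by_cases his : i = s
  · subst his
    have hjt : j ≠ t := fun hjt ↦ h (by rw [hjt])
    have hcomp : (fun X : Fin n → Fin m → Y ↦ (X i j, X i t))
        = (fun x ↦ (x j, x t)) ∘ Function.eval i := rfl
    rw [hcomp, ← Measure.map_map (f := Function.eval i) (by fun_prop) (by fun_prop),
      (measurePreserving_eval _ i).map_eq, Measure.pi_map_pair _ hjt]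
  · have hcomp : (fun X : Fin n → Fin m → Y ↦ (X i j, X s t))
        = Prod.map (Function.eval j) (Function.eval t) ∘
          fun X : Fin n → Fin m → Y ↦ (X i, X s) := rfl
    rw [hcomp, ← Measure.map_map (by fun_prop) (by fun_prop), Measure.pi_map_pair _ his,
      ← Measure.map_prod_map _ _ (by fun_prop) (by fun_prop),
      (measurePreserving_eval _ j).map_eq, (measurePreserving_eval _ t).map_eq]

section Law

variable (ν : Measure (ProbabilityMeasure Y)) {n m : ℕ}

lemma twoStage_map_pair {i s : Fin n} {j t : Fin m} (h : (i, j) ≠ (s, t)) :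
    (twoStage ν n m).map (fun X ↦ (X i j, X s t))
      = (pmKernel Y ∥ₖ pmKernel Y) ∘ₘ
          (Measure.pi fun _ ↦ ν).map (fun Ps ↦ (Ps i, Ps s)) := by
  have hker : (twoStageKernel Y n m).map (fun X ↦ (X i j, X s t))
      = (pmKernel Y ∥ₖ pmKernel Y).comap (fun Ps ↦ (Ps i, Ps s)) (by fun_prop) := by
    ext1 Ps
    rw [Kernel.map_apply _ (by fun_prop), twoStageKernel_map_pair Ps h, Kernel.comap_apply,
      Kernel.parallelComp_apply]
    rfl
  rw [twoStage_eq_comp, Measure.map_comp _ _ (by fun_prop), hker,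
    Measure.comap_comp_eq_comp_map]

variable [IsProbabilityMeasure ν]

lemma twoStage_map_pair_of_ne {i s : Fin n} (his : i ≠ s) (j t : Fin m) :
    (twoStage ν n m).map (fun X ↦ (X i j, X s t)) = (pmJoin ν).prod (pmJoin ν) := by
  rw [twoStage_map_pair ν (by simp [his]), Measure.pi_map_pair _ his, pmJoin_eq_comp,
    Measure.prod_comp_comp]

lemma twoStage_map_pair_self (i : Fin n) {j t : Fin m} (hjt : j ≠ t) :
    (twoStage ν n m).map (fun X ↦ (X i j, X i t))
      = (pmKernel Y ∥ₖ pmKernel Y) ∘ₘ ν.map (fun P ↦ (P, P)) := by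
  have hdiag : (Measure.pi fun _ : Fin n ↦ ν).map (fun Ps ↦ (Ps i, Ps i))
      = ν.map (fun P ↦ (P, P)) := by
    conv_rhs => rw [← (measurePreserving_eval (fun _ : Fin n ↦ ν) i).map_eq]
    rw [Measure.map_map (by fun_prop) (by fun_prop)]
    rfl
  rw [twoStage_map_pair ν (by simp [hjt]), hdiag]

end Law

section Moments

variable {k : Y → Y → ℝ}

lemma integrable_comp_prodMk_of_bounded {α : Type*} [MeasurableSpace α] {μ : Measure α}
    [IsFiniteMeasure μ] (hk_meas : Measurable fun p : Y × Y ↦ k p.1 p.2)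
    (hk_bdd : ∃ K, ∀ x y, |k x y| ≤ K) {f g : α → Y} (hf : Measurable f)
    (hg : Measurable g) :
    Integrable (fun a ↦ k (f a) (g a)) μ := by
  obtain ⟨K, hK⟩ := hk_bdd
  exact .of_bound (hk_meas.comp (hf.prodMk hg)).aestronglyMeasurable K
    (ae_of_all _ fun a ↦ hK _ _)

lemma kerInner_eq_integral_prod (hk_meas : Measurable fun p : Y × Y ↦ k p.1 p.2)
    (hk_bdd : ∃ K, ∀ x y, |k x y| ≤ K) (P Q : Measure Y) [IsFiniteMeasure P]
    [IsFiniteMeasure Q] :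
    kerInner k P Q = ∫ p, k p.1 p.2 ∂(P.prod Q) :=
  (integral_prod _ (integrable_comp_prodMk_of_bounded hk_meas hk_bdd measurable_fst
    measurable_snd)).symm

variable (ν : Measure (ProbabilityMeasure Y)) [IsProbabilityMeasure ν] {n m : ℕ}

lemma integral_twoStage_of_ne (hk_meas : Measurable fun p : Y × Y ↦ k p.1 p.2)
    (hk_bdd : ∃ K, ∀ x y, |k x y| ≤ K) {i s : Fin n} (his : i ≠ s) (j t : Fin m) :
    ∫ X, k (X i j) (X s t) ∂(twoStage ν n m) = kerInner k (pmJoin ν) (pmJoin ν) := by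
  rw [kerInner_eq_integral_prod hk_meas hk_bdd, ← twoStage_map_pair_of_ne ν his j t,
    integral_map (by fun_prop) hk_meas.aestronglyMeasurable]

lemma integral_twoStage_self (hk_meas : Measurable fun p : Y × Y ↦ k p.1 p.2)
    (hk_bdd : ∃ K, ∀ x y, |k x y| ≤ K) (i : Fin n) {j t : Fin m} (hjt : j ≠ t) :
    ∫ X, k (X i j) (X i t) ∂(twoStage ν n m) = ∫ P, kerInner k (P : Measure Y) P ∂ν := by
  calc ∫ X, k (X i j) (X i t) ∂(twoStage ν n m)
      = ∫ p, k p.1 p.2 ∂((twoStage ν n m).map fun X ↦ (X i j, X i t)) :=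
        (integral_map (φ := fun X : Fin n → Fin m → Y ↦ (X i j, X i t)) (by fun_prop)
          hk_meas.aestronglyMeasurable).symm
    _ = ∫ P, ∫ p, k p.1 p.2 ∂((pmKernel Y ∥ₖ pmKernel Y) (P, P)) ∂ν := by
        rw [twoStage_map_pair_self ν i hjt, Measure.integral_comp
          (integrable_comp_prodMk_of_bounded hk_meas hk_bdd measurable_fst measurable_snd)]
        exact integral_map (by fun_prop)
          (hk_meas.stronglyMeasurable.integral_kernel
            (κ := pmKernel Y ∥ₖ pmKernel Y)).aestronglyMeasurable
    _ = ∫ P, kerInner k (P : Measure Y) P ∂ν := by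
        refine integral_congr_ae (ae_of_all _ fun P ↦ ?_)
        dsimp only
        rw [Kernel.parallelComp_apply, kerInner_eq_integral_prod hk_meas hk_bdd]
        rfl

end Moments

section Counting

variable {k : Y → Y → ℝ} {n m : ℕ} {μ : Measure (Fin n → Fin m → Y)}

lemma integrable_sum_sum
    (hint : ∀ i s j t, Integrable (fun X : Fin n → Fin m → Y ↦ k (X i j) (X s t)) μ)
    (i s : Fin n) (J : Finset (Fin m)) (T : Fin m → Finset (Fin m)) :
    Integrable (fun X : Fin n → Fin m → Y ↦ ∑ j ∈ J, ∑ t ∈ T j, k (X i j) (X s t)) μ :=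
  integrable_finsetSum _ fun j _ ↦ integrable_finsetSum _ fun t _ ↦ hint i s j t

lemma integral_sum_sameGroup (hm : 1 ≤ m) {A : ℝ}
    (hint : ∀ i s j t, Integrable (fun X : Fin n → Fin m → Y ↦ k (X i j) (X s t)) μ)
    (hA : ∀ i j t, j ≠ t → ∫ X, k (X i j) (X i t) ∂μ = A) :
    ∫ X, ∑ i, ∑ j, ∑ t ∈ Finset.univ.erase j, k (X i j) (X i t) ∂μ
      = n * (m * ((m - 1) * A)) := by
  have hrow (i : Fin n) (j : Fin m) :
      ∫ X, ∑ t ∈ Finset.univ.erase j, k (X i j) (X i t) ∂μ = (m - 1) * A := by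
    rw [integral_finsetSum_eq_card_mul (fun t _ ↦ hint i i j t)
        fun t ht ↦ hA i j t (Finset.ne_of_mem_erase ht).symm,
      Finset.card_erase_of_mem (Finset.mem_univ j), Finset.card_univ, Fintype.card_fin,
      Nat.cast_pred hm]
  rw [integral_finsetSum_eq_card_mul (fun i _ ↦ integrable_sum_sum hint i i _ _) fun i _ ↦
    integral_finsetSum_eq_card_mul (fun j _ ↦ integrable_finsetSum _ fun t _ ↦ hint i i j t)
      fun j _ ↦ hrow i j]
  simp

lemma integral_sum_distinctGroups (hn : 1 ≤ n) {B : ℝ}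
    (hint : ∀ i s j t, Integrable (fun X : Fin n → Fin m → Y ↦ k (X i j) (X s t)) μ)
    (hB : ∀ i s, i ≠ s → ∀ j t, ∫ X, k (X i j) (X s t) ∂μ = B) :
    ∫ X, ∑ i, ∑ s ∈ Finset.univ.erase i, ∑ j, ∑ t, k (X i j) (X s t) ∂μ
      = n * ((n - 1) * (m * (m * B))) := by
  have hblock (i s : Fin n) (his : i ≠ s) :
      ∫ X, ∑ j, ∑ t, k (X i j) (X s t) ∂μ = m * (m * B) := by
    rw [integral_finsetSum_eq_card_mul (fun j _ ↦ integrable_finsetSum _ fun t _ ↦ hint i s j t)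
      fun j _ ↦ integral_finsetSum_eq_card_mul (fun t _ ↦ hint i s j t) fun t _ ↦ hB i s his j t]
    simp
  have hcol (i : Fin n) :
      ∫ X, ∑ s ∈ Finset.univ.erase i, ∑ j, ∑ t, k (X i j) (X s t) ∂μ
        = (n - 1) * (m * (m * B)) := by
    rw [integral_finsetSum_eq_card_mul (fun s _ ↦ integrable_sum_sum hint i s _ _)
        fun s hs ↦ hblock i s (Finset.ne_of_mem_erase hs).symm,
      Finset.card_erase_of_mem (Finset.mem_univ i), Finset.card_univ, Fintype.card_fin,
      Nat.cast_pred hn]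
  rw [integral_finsetSum_eq_card_mul
    (fun i _ ↦ integrable_finsetSum _ fun s _ ↦ integrable_sum_sum hint i s _ _) fun i _ ↦ hcol i]
  simp

lemma integral_varEst (hn : 2 ≤ n) (hm : 2 ≤ m) {A B : ℝ}
    (hint : ∀ i s j t, Integrable (fun X : Fin n → Fin m → Y ↦ k (X i j) (X s t)) μ)
    (hA : ∀ i j t, j ≠ t → ∫ X, k (X i j) (X i t) ∂μ = A)
    (hB : ∀ i s, i ≠ s → ∀ j t, ∫ X, k (X i j) (X s t) ∂μ = B) :
    ∫ X, varEst k n m X ∂μ = A - B := by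
  have hn1 : (n : ℝ) - 1 ≠ 0 := sub_ne_zero.mpr (Nat.cast_ne_one.mpr (by omega))
  have hm1 : (m : ℝ) - 1 ≠ 0 := sub_ne_zero.mpr (Nat.cast_ne_one.mpr (by omega))
  unfold varEst
  rw [integral_sub ((integrable_finsetSum _ fun i _ ↦ integrable_sum_sum hint i i _ _).const_mul _)
      ((integrable_finsetSum _ fun i _ ↦ integrable_finsetSum _ fun s _ ↦
        integrable_sum_sum hint i s _ _).const_mul _),
    integral_const_mul, integral_const_mul, integral_sum_sameGroup (by omega) hint hA,
    integral_sum_distinctGroups (by omega) hint hB]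
  field_simp

end Counting

end TwoStage

theorem varEst_unbiased_general
    {Y : Type*} [MeasurableSpace Y]
    (k : Y → Y → ℝ)
    (hk_meas : Measurable fun p : Y × Y => k p.1 p.2)
    (hk_bdd : ∃ K, ∀ x y, |k x y| ≤ K)
    (ν : Measure (ProbabilityMeasure Y)) [IsProbabilityMeasure ν]
    (n m : ℕ) (hn : 2 ≤ n) (hm : 2 ≤ m) :
    ∫ X, varEst k n m X ∂(twoStage ν n m)
      = (∫ P, kerInner k (P : Measure Y) (P : Measure Y) ∂ν)
        - kerInner k (pmJoin ν) (pmJoin ν) :=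
  integral_varEst hn hm
    (fun _ _ _ _ ↦ integrable_comp_prodMk_of_bounded hk_meas hk_bdd (by fun_prop) (by fun_prop))
    (fun i _ _ hjt ↦ integral_twoStage_self ν hk_meas hk_bdd i hjt)
    (fun _ _ his j t ↦ integral_twoStage_of_ne ν hk_meas hk_bdd his j t)

/-- Unbiasedness of the distributional variance estimator:
`E_{μ_{n,m}}[V̂ar_k^{(n,m)}] = Var_k(ν) = ∫ ⟨P|k|P⟩ dν(P) − ⟨join(ν)|k|join(ν)⟩`. -/
theorem varEst_unbiased
    {Y : Type*} [MeasurableSpace Y]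
    (k : Y → Y → ℝ)
    (hk_meas : Measurable fun p : Y × Y => k p.1 p.2)
    (hk_symm : ∀ x y, k x y = k y x)
    (hk_bdd : ∃ K, ∀ x y, |k x y| ≤ K)
    (hk_psd : ∀ (N : ℕ) (x : Fin N → Y) (a : Fin N → ℝ),
      0 ≤ ∑ i, ∑ j, a i * k (x i) (x j) * a j)
    (ν : Measure (ProbabilityMeasure Y)) [IsProbabilityMeasure ν]
    (n m : ℕ) (hn : 2 ≤ n) (hm : 2 ≤ m) :
    ∫ X, varEst k n m X ∂(twoStage ν n m)
      = (∫ P, kerInner k (P : Measure Y) (P : Measure Y) ∂ν)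
        - kerInner k (pmJoin ν) (pmJoin ν) :=
  varEst_unbiased_general k hk_meas hk_bdd ν n m hn hm
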